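/- arXiv:1101.3058 — 3 statements merged into one kernel-verified Lean document; each statement's English description precedes it below -/
import Mathlib

section
/- If u ∈ H¹(ℝ^N;ℂ) satisfies ‖∇u‖_{L²} ‖u‖_{L²}^σ ≤ ‖∇Q‖_{L²} ‖Q‖_{L²}^σ, then E(u) ≥ ((Nα−4)/(2Nα)) ‖∇u‖_{L²}². -/
open MeasureTheory Filter

noncomputable section

abbrev Rn (N : ℕ) : Type := EuclideanSpace ℝ (Fin N)

/-- pointwise squared norm of the gradient of a complex-valued function on `ℝ^N` -/
def gradNormSq (N : ℕ) (u : Rn N → ℂ) (x : Rn N) : ℝ :=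
  ∑ i : Fin N, ‖fderiv ℝ u x (EuclideanSpace.single i 1)‖ ^ 2

/-- the `L²` norm of the gradient, `‖∇u‖_{L²}` -/
def gradL2 (N : ℕ) (u : Rn N → ℂ) : ℝ := Real.sqrt (∫ x, gradNormSq N u x)

/-- the mass `M(u) = ∫ |u|²` -/
def massM (N : ℕ) (u : Rn N → ℂ) : ℝ := ∫ x, ‖u x‖ ^ 2

/-- the `L²` norm -/
def l2norm (N : ℕ) (u : Rn N → ℂ) : ℝ := Real.sqrt (massM N u)

/-- the `L^p` norm -/
def lpnorm (N : ℕ) (p : ℝ) (u : Rn N → ℂ) : ℝ := (∫ x, ‖u x‖ ^ p) ^ (1 / p)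

/-- the energy `E(u) = ½∫|∇u|² − (1/(α+2))∫|u|^{α+2}` -/
def energyE (N : ℕ) (α : ℝ) (u : Rn N → ℂ) : ℝ :=
  (1 / 2) * (∫ x, gradNormSq N u x) - (1 / (α + 2)) * ∫ x, ‖u x‖ ^ (α + 2)

/-- membership in `H¹(ℝ^N;ℂ)` (with the finiteness of the `L^{α+2}` norm,
which follows from the Sobolev embedding) -/
def InH1 (N : ℕ) (α : ℝ) (u : Rn N → ℂ) : Prop :=
  Differentiable ℝ u ∧ Integrable (fun x => ‖u x‖ ^ 2) ∧
    Integrable (gradNormSq N u) ∧ Integrable fun x : Rn N => ‖u x‖ ^ (α + 2)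

/-!
Write `s = 4 - (N - 2)α` and `k = (Nα - 4)/2 > 0`, so that `σk = s/2` and `Nα/2 = k + 2`.
The Gagliardo–Nirenberg bound then reads
`∫|u|^{α+2} ≤ C_GN (‖∇u‖ ‖u‖^σ)^k ‖∇u‖²`, which is monotone in the scale-invariant quantity
`‖∇u‖ ‖u‖^σ`. Under the hypothesis it is at most its value at `Q`, where the bound is an equality;
the Pohozaev identities evaluate `C_GN (‖∇Q‖ ‖Q‖^σ)^k = ‖Q‖_{α+2}^{α+2} / ‖∇Q‖²` as `2(α+2)/(Nα)`.
Hence `∫|u|^{α+2} ≤ (2(α+2)/(Nα)) ‖∇u‖²` and `E(u) ≥ (1/2 - 2/(Nα)) ‖∇u‖²`.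
-/

namespace Real

theorem rpow_mul_rpow_add_two {M G : ℝ} (hM : 0 ≤ M) (hG : 0 ≤ G) (σ : ℝ) {k : ℝ}
    (hk : k + 2 ≠ 0) : M ^ (σ * k) * G ^ (k + 2) = (G * M ^ σ) ^ k * G ^ 2 := by
  rw [mul_rpow hG (rpow_nonneg hM σ), ← rpow_mul hM, rpow_add' hG hk, rpow_two]
  ring

theorem le_div_sq_mul_sq_of_le_rpow_mul_rpow {L L₀ C M G M₀ G₀ σ k : ℝ} (hk : 0 < k)
    (hM : 0 ≤ M) (hG : 0 ≤ G) (hM₀ : 0 < M₀) (hG₀ : 0 < G₀) (hL₀ : 0 ≤ L₀)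
    (hC : C = L₀ / (M₀ ^ (σ * k) * G₀ ^ (k + 2)))
    (hL : L ≤ C * M ^ (σ * k) * G ^ (k + 2))
    (hle : G * M ^ σ ≤ G₀ * M₀ ^ σ) :
    L ≤ L₀ / G₀ ^ 2 * G ^ 2 := by
  have hk2 : k + 2 ≠ 0 := by linarith
  have hC_scale : C * (G₀ * M₀ ^ σ) ^ k = L₀ / G₀ ^ 2 := by
    rw [hC, rpow_mul_rpow_add_two hM₀.le hG₀.le σ hk2]
    field_simp
  have hC_nonneg : 0 ≤ C := by rw [hC]; positivity
  calc L ≤ C * ((G * M ^ σ) ^ k * G ^ 2) := by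
        rwa [mul_assoc, rpow_mul_rpow_add_two hM hG σ hk2] at hL
    _ ≤ C * ((G₀ * M₀ ^ σ) ^ k * G ^ 2) := by gcongr
    _ = L₀ / G₀ ^ 2 * G ^ 2 := by rw [← mul_assoc, hC_scale]

end Real

theorem div_eq_div_of_eq_div_mul {m a b c x y : ℝ} (hm : 0 < m) (hb : b ≠ 0) (hc : c ≠ 0)
    (hx : m = a / b * x) (hy : m = a / c * y) : y / x = c / b := by
  have ha : a ≠ 0 := by rintro rfl; rw [zero_div, zero_mul] at hx; linarith
  have hx0 : x ≠ 0 := by rintro rfl; rw [mul_zero] at hx; linarith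
  rw [div_eq_div_iff hx0 hb]
  field_simp at hx hy
  apply mul_left_cancel₀ ha
  linear_combination hx * c - hy * b

theorem lpnorm_rpow_self {N : ℕ} {p : ℝ} (hp : p ≠ 0) (u : Rn N → ℂ) :
    lpnorm N p u ^ p = ∫ x, ‖u x‖ ^ p := by
  have hint : 0 ≤ ∫ x, ‖u x‖ ^ p := integral_nonneg fun _ => Real.rpow_nonneg (norm_nonneg _) p
  rw [lpnorm, ← Real.rpow_mul hint, one_div_mul_cancel hp, Real.rpow_one]

theorem lpnorm_nonneg (N : ℕ) (p : ℝ) (u : Rn N → ℂ) : 0 ≤ lpnorm N p u :=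
  Real.rpow_nonneg (integral_nonneg fun _ => Real.rpow_nonneg (norm_nonneg _) p) _

theorem gradL2_sq (N : ℕ) (u : Rn N → ℂ) : gradL2 N u ^ 2 = ∫ x, gradNormSq N u x :=
  Real.sq_sqrt (integral_nonneg fun _ => Finset.sum_nonneg fun _ _ => sq_nonneg _)

theorem energy_lower_bound_general
    (N : ℕ) (hN : 1 ≤ N) (α : ℝ) (hα₁ : 4 / (N : ℝ) < α)
    (σ : ℝ) (hσ : σ = (4 - ((N : ℝ) - 2) * α) / ((N : ℝ) * α - 4))
    (Q : Rn N → ℂ) (hQpos : 0 < massM N Q)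
    (CGN : ℝ)
    (hCGN : CGN = lpnorm N (α + 2) Q ^ (α + 2) /
      (l2norm N Q ^ ((4 - ((N : ℝ) - 2) * α) / 2) * gradL2 N Q ^ ((N : ℝ) * α / 2)))
    (hGN : ∀ f : Rn N → ℂ, InH1 N α f →
      lpnorm N (α + 2) f ^ (α + 2) ≤
        CGN * l2norm N f ^ ((4 - ((N : ℝ) - 2) * α) / 2) * gradL2 N f ^ ((N : ℝ) * α / 2))
    (hPoho₁ : massM N Q = ((4 - ((N : ℝ) - 2) * α) / ((N : ℝ) * α)) * gradL2 N Q ^ 2)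
    (hPoho₂ : massM N Q =
      ((4 - ((N : ℝ) - 2) * α) / (2 * (α + 2))) * lpnorm N (α + 2) Q ^ (α + 2))
    (u : Rn N → ℂ) (hu : InH1 N α u)
    (hle : gradL2 N u * l2norm N u ^ σ ≤ gradL2 N Q * l2norm N Q ^ σ) :
    energyE N α u ≥ (((N : ℝ) * α - 4) / (2 * (N : ℝ) * α)) * gradL2 N u ^ 2 := by
  have hNα : 4 < (N : ℝ) * α := by
    rwa [div_lt_iff₀ (by exact_mod_cast hN), mul_comm] at hα₁
  have hα₀ : 0 < α := by nlinarith [(Nat.cast_nonneg N : (0 : ℝ) ≤ N)]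
  have hα : 0 < α + 2 := by linarith
  set k := ((N : ℝ) * α - 4) / 2 with hk
  have hσk : (4 - ((N : ℝ) - 2) * α) / 2 = σ * k := by
    rw [hσ, hk]; field_simp [(by linarith : (N : ℝ) * α - 4 ≠ 0)]
  have hk2 : (N : ℝ) * α / 2 = k + 2 := by ring
  have hGQ : 0 < gradL2 N Q := (Real.sqrt_nonneg _).lt_of_ne' fun h => by
    rw [gradL2, h, zero_pow two_ne_zero, mul_zero] at hPoho₁; linarith
  have hratio : lpnorm N (α + 2) Q ^ (α + 2) / gradL2 N Q ^ 2 = 2 * (α + 2) / ((N : ℝ) * α) :=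
    div_eq_div_of_eq_div_mul hQpos (by positivity) (by positivity) hPoho₁ hPoho₂
  have hnonlinear : ∫ x, ‖u x‖ ^ (α + 2) ≤ 2 * (α + 2) / ((N : ℝ) * α) * gradL2 N u ^ 2 := by
    rw [← lpnorm_rpow_self hα.ne', ← hratio]
    have hGNu := hGN u hu
    rw [hσk, hk2] at hCGN hGNu
    exact Real.le_div_sq_mul_sq_of_le_rpow_mul_rpow (by positivity) (Real.sqrt_nonneg _)
      (Real.sqrt_nonneg _) (Real.sqrt_pos.mpr hQpos) hGQ
      (Real.rpow_nonneg (lpnorm_nonneg N _ Q) _) hCGN hGNu hle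
  rw [energyE, ← gradL2_sq, ge_iff_le]
  calc ((N : ℝ) * α - 4) / (2 * (N : ℝ) * α) * gradL2 N u ^ 2
      = 1 / 2 * gradL2 N u ^ 2 -
          1 / (α + 2) * (2 * (α + 2) / ((N : ℝ) * α) * gradL2 N u ^ 2) := by
        field_simp; ring
    _ ≤ _ := by gcongr

theorem energy_lower_bound
    (N : ℕ) (hN : 1 ≤ N) (α : ℝ) (hα₁ : 4 / (N : ℝ) < α)
    (hα₂ : 3 ≤ N → α < 4 / ((N : ℝ) - 2))
    (σ : ℝ) (hσ : σ = (4 - ((N : ℝ) - 2) * α) / ((N : ℝ) * α - 4))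
    (Q : Rn N → ℂ) (hQH1 : InH1 N α Q) (hQpos : 0 < massM N Q)
    (CGN : ℝ)
    (hCGN : CGN = lpnorm N (α + 2) Q ^ (α + 2) /
      (l2norm N Q ^ ((4 - ((N : ℝ) - 2) * α) / 2) * gradL2 N Q ^ ((N : ℝ) * α / 2)))
    (hGN : ∀ f : Rn N → ℂ, InH1 N α f →
      lpnorm N (α + 2) f ^ (α + 2) ≤
        CGN * l2norm N f ^ ((4 - ((N : ℝ) - 2) * α) / 2) * gradL2 N f ^ ((N : ℝ) * α / 2))
    (hPoho₁ : massM N Q = ((4 - ((N : ℝ) - 2) * α) / ((N : ℝ) * α)) * gradL2 N Q ^ 2)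
    (hPoho₂ : massM N Q =
      ((4 - ((N : ℝ) - 2) * α) / (2 * (α + 2))) * lpnorm N (α + 2) Q ^ (α + 2))
    (u : Rn N → ℂ) (hu : InH1 N α u)
    (hle : gradL2 N u * l2norm N u ^ σ ≤ gradL2 N Q * l2norm N Q ^ σ) :
    energyE N α u ≥ (((N : ℝ) * α - 4) / (2 * (N : ℝ) * α)) * gradL2 N u ^ 2 :=
  energy_lower_bound_general N hN α hα₁ σ hσ Q hQpos CGN hCGN hGN hPoho₁ hPoho₂ u hu hle
end
end

section
/- Let ν ≥ 1, 1 ≤ q < ∞, and let E be a relatively compact subset of L^q(ℝ^ν;ℂ) (in the L^q-norm topology). If (y_n¹)_{n≥1}, (y_n²)_{n≥1} ⊂ ℝ^ν satisfy |y_n¹ − y_n²| → ∞ as n → ∞, then sup_{u,v ∈ E} ∫_{ℝ^ν} |u(x − y_n¹)|^{q/2} |v(x − y_n²)|^{q/2} dx → 0 as n → ∞. -/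
/-!
Translate so that `u` is centred, leaving `v` shifted by `c = y¹ - y²`, and split space along the
ball `B` of radius `‖c‖ / 2` about the origin. On `B` the shifted `v` only sees the part of `v`
outside `B`, and off `B` the function `u` only sees its own tail; Cauchy–Schwarz on the two pieces
bounds the overlap by `2 (M τ)^(q/2)`, where `M` bounds the `L^q` norms on `E` and `τ` is the
largest `L^q` norm outside `B` of a function of `E`. A totally bounded subset of `L^q` is bounded
and its tails are uniformly small (a finite net, each member approximable by a compactly supported
function), so `τ → 0` as `‖c‖ → ∞`.
-/

open MeasureTheory Filter Metric Set
open scoped ENNReal Topology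

noncomputable section

theorem Bornology.IsBounded.iSup_enorm_ne_top {E : Type*} [SeminormedAddGroup E] {s : Set E}
    (hs : Bornology.IsBounded s) : ⨆ x ∈ s, ‖x‖ₑ ≠ ∞ := by
  obtain ⟨C, hC⟩ := isBounded_iff_forall_norm_le.1 hs
  refine ne_top_of_le_ne_top (ENNReal.ofReal_ne_top (r := C)) (iSup₂_le fun x hx => ?_)
  rw [← ofReal_norm]
  exact ENNReal.ofReal_le_ofReal (hC x hx)

theorem tendsto_biSup_biSup_of_le_toReal {ι β : Type*} {l : Filter β} {s : Set ι}
    {f : β → ι → ι → ℝ} {g : β → ι → ι → ℝ≥0∞}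
    (hg : Tendsto (fun n => ⨆ i ∈ s, ⨆ j ∈ s, g n i j) l (𝓝 0))
    (hf_nonneg : ∀ n i j, 0 ≤ f n i j) (hfg : ∀ n i j, f n i j ≤ (g n i j).toReal) :
    Tendsto (fun n => ⨆ i ∈ s, ⨆ j ∈ s, f n i j) l (𝓝 0) := by
  have hfin : ∀ᶠ n in l, ⨆ i ∈ s, ⨆ j ∈ s, g n i j ≠ ∞ :=
    hg.eventually (eventually_ne_nhds ENNReal.zero_ne_top)
  refine tendsto_of_tendsto_of_tendsto_of_le_of_le' tendsto_const_nhds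
    (by simpa using (ENNReal.tendsto_toReal ENNReal.zero_ne_top).comp hg)
    (.of_forall fun n => ?_) (hfin.mono fun n hn => ?_)
  · exact Real.iSup_nonneg fun i => Real.iSup_nonneg fun _ =>
      Real.iSup_nonneg fun j => Real.iSup_nonneg fun _ => hf_nonneg n i j
  · have hle : ∀ i ∈ s, ∀ j ∈ s, f n i j ≤ (⨆ i ∈ s, ⨆ j ∈ s, g n i j).toReal :=
      fun i hi j hj => (hfg n i j).trans <| ENNReal.toReal_mono hn <|
        (le_biSup (g n i) hj).trans (le_biSup (fun i => ⨆ j ∈ s, g n i j) hi)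
    exact Real.iSup_le (fun i => Real.iSup_le (fun hi => Real.iSup_le (fun j =>
      Real.iSup_le (fun hj => hle i hi j hj) ENNReal.toReal_nonneg) ENNReal.toReal_nonneg)
      ENNReal.toReal_nonneg) ENNReal.toReal_nonneg

section

variable {α F : Type*} [MeasurableSpace α] {μ : Measure α} [NormedAddCommGroup F] {p : ℝ≥0∞}

theorem lintegral_enorm_rpow_half_mul_le (hp0 : p ≠ 0) (hp : p ≠ ∞) {f g : α → F}
    (hf : AEStronglyMeasurable f μ) (hg : AEStronglyMeasurable g μ) :
    ∫⁻ x, ‖f x‖ₑ ^ (p.toReal / 2) * ‖g x‖ₑ ^ (p.toReal / 2) ∂μ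
      ≤ (eLpNorm f p μ * eLpNorm g p μ) ^ (p.toReal / 2) := by
  have hsq : ∀ h : α → F, (∫⁻ x, (‖h x‖ₑ ^ (p.toReal / 2)) ^ (2 : ℝ) ∂μ) ^ (1 / 2 : ℝ)
      = eLpNorm h p μ ^ (p.toReal / 2) := fun h => by
    simp_rw [eLpNorm_eq_eLpNorm' hp0 hp, eLpNorm', ← ENNReal.rpow_mul,
      div_mul_cancel₀ _ (two_ne_zero' ℝ)]
    congr 1
    field_simp [(ENNReal.toReal_pos hp0 hp).ne']
  calc ∫⁻ x, ‖f x‖ₑ ^ (p.toReal / 2) * ‖g x‖ₑ ^ (p.toReal / 2) ∂μ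
      ≤ (∫⁻ x, (‖f x‖ₑ ^ (p.toReal / 2)) ^ (2 : ℝ) ∂μ) ^ (1 / 2 : ℝ)
          * (∫⁻ x, (‖g x‖ₑ ^ (p.toReal / 2)) ^ (2 : ℝ) ∂μ) ^ (1 / 2 : ℝ) :=
        ENNReal.lintegral_mul_le_Lp_mul_Lq μ Real.HolderConjugate.two_two
          (hf.enorm.pow_const _) (hg.enorm.pow_const _)
    _ = (eLpNorm f p μ * eLpNorm g p μ) ^ (p.toReal / 2) := by
        rw [hsq, hsq, ENNReal.mul_rpow_of_nonneg _ _ (by positivity)]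

variable [NormedAddCommGroup α] [BorelSpace α]

section Tightness

variable [ProperSpace α] [μ.Regular] [NormedSpace ℝ F]

theorem MeasureTheory.MemLp.tendsto_eLpNorm_restrict_compl_ball (hp : p ≠ ∞) {f : α → F}
    (hf : MemLp f p μ) :
    Tendsto (fun R => eLpNorm f p (μ.restrict (ball 0 R)ᶜ)) atTop (𝓝 0) := by
  refine ENNReal.tendsto_nhds_zero.2 fun ε hε => ?_
  obtain ⟨g, hg_supp, hfg, -, -⟩ := hf.exists_hasCompactSupport_eLpNorm_sub_le hp hε.ne'
  obtain ⟨R₀, hR₀⟩ := hg_supp.isCompact.isBounded.subset_ball (0 : α)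
  filter_upwards [eventually_ge_atTop R₀] with R hR
  have hf_eq : ∀ x ∈ (ball (0 : α) R)ᶜ, f x = (f - g) x := fun x hx => by
    have : x ∉ tsupport g := fun h => hx (ball_subset_ball hR (hR₀ h))
    simp [image_eq_zero_of_notMem_tsupport this]
  calc eLpNorm f p (μ.restrict (ball 0 R)ᶜ) = eLpNorm (f - g) p (μ.restrict (ball 0 R)ᶜ) :=
        eLpNorm_congr_ae ((ae_restrict_iff' measurableSet_ball.compl).2 (.of_forall hf_eq))
    _ ≤ eLpNorm (f - g) p μ := eLpNorm_mono_measure _ Measure.restrict_le_self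
    _ ≤ ε := hfg

theorem TotallyBounded.tendsto_iSup_eLpNorm_restrict_compl_ball [Fact (1 ≤ p)] (hp : p ≠ ∞)
    {E : Set (Lp F p μ)} (hE : TotallyBounded E) :
    Tendsto (fun R => ⨆ u ∈ E, eLpNorm u p (μ.restrict (ball 0 R)ᶜ)) atTop (𝓝 0) := by
  refine ENNReal.tendsto_nhds_zero.2 fun ε hε => ?_
  obtain ⟨t, ht, hEt⟩ := EMetric.totallyBounded_iff.1 hE (ε / 2) (ENNReal.half_pos hε.ne')
  have hnet : ∀ᶠ R in atTop, ∀ w ∈ t, eLpNorm w p (μ.restrict (ball 0 R)ᶜ) ≤ ε / 2 :=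
    ht.eventually_all.2 fun w _ => ENNReal.tendsto_nhds_zero.1
      ((Lp.memLp w).tendsto_eLpNorm_restrict_compl_ball hp) _ (ENNReal.half_pos hε.ne')
  filter_upwards [hnet] with R hR
  refine iSup₂_le fun u hu => ?_
  obtain ⟨w, hw, huw⟩ := mem_iUnion₂.1 (hEt hu)
  rw [Metric.mem_eball, Lp.edist_def] at huw
  set ρ := μ.restrict (ball 0 R)ᶜ
  calc eLpNorm u p ρ = eLpNorm ((⇑u - ⇑w) + ⇑w) p ρ := by rw [sub_add_cancel]
    _ ≤ eLpNorm (⇑u - ⇑w) p ρ + eLpNorm w p ρ :=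
        eLpNorm_add_le ((Lp.aestronglyMeasurable u).sub (Lp.aestronglyMeasurable w)).restrict
          (Lp.aestronglyMeasurable w).restrict Fact.out
    _ ≤ ε / 2 + ε / 2 :=
        add_le_add ((eLpNorm_mono_measure _ Measure.restrict_le_self).trans huw.le) (hR w hw)
    _ = ε := ENNReal.add_halves ε

end Tightness

variable [μ.IsAddRightInvariant]

theorem eLpNorm_restrict_ball_comp_add_right_le {v : α → F} (hv : AEStronglyMeasurable v μ)
    {c : α} {r : ℝ} (hr : 2 * r ≤ ‖c‖) :
    eLpNorm (fun x => v (x + c)) p (μ.restrict (ball 0 r))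
      ≤ eLpNorm v p (μ.restrict (ball 0 r)ᶜ) := by
  have hpre : (· + c) ⁻¹' ball c r = ball (0 : α) r := by
    ext x
    simp [dist_eq_norm]
  have hmp := (measurePreserving_add_right μ c).restrict_preimage_emb
    (measurableEmbedding_addRight c) (ball c r)
  rw [hpre] at hmp
  calc eLpNorm (fun x => v (x + c)) p (μ.restrict (ball 0 r))
      = eLpNorm v p (μ.restrict (ball c r)) :=
        eLpNorm_comp_measurePreserving hv.restrict hmp
    _ ≤ eLpNorm v p (μ.restrict (ball 0 r)ᶜ) := by
        refine eLpNorm_mono_measure _ (Measure.restrict_mono (fun x hx => ?_) le_rfl)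
        simp only [mem_compl_iff, mem_ball, dist_eq_norm, sub_zero, not_lt] at hx ⊢
        have := norm_sub_norm_le c x
        rw [← norm_neg (c - x), neg_sub] at this
        linarith

theorem lintegral_translate_overlap_le (hp0 : p ≠ 0) (hp : p ≠ ∞) {u v : α → F}
    (hu : AEStronglyMeasurable u μ) (hv : AEStronglyMeasurable v μ) (a b : α) :
    ∫⁻ x, ‖u (x - a)‖ₑ ^ (p.toReal / 2) * ‖v (x - b)‖ₑ ^ (p.toReal / 2) ∂μ
      ≤ (eLpNorm u p μ * eLpNorm v p (μ.restrict (ball 0 (‖a - b‖ / 2))ᶜ)) ^ (p.toReal / 2)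
        + (eLpNorm u p (μ.restrict (ball 0 (‖a - b‖ / 2))ᶜ) * eLpNorm v p μ) ^ (p.toReal / 2) := by
  set S := ball (0 : α) (‖a - b‖ / 2)
  set w : α → F := fun x => v (x + (a - b))
  have hw : AEStronglyMeasurable w μ :=
    hv.comp_measurePreserving (measurePreserving_add_right μ _)
  have hw_norm : eLpNorm w p μ = eLpNorm v p μ :=
    eLpNorm_comp_measurePreserving hv (measurePreserving_add_right μ _)
  have hw_ball : eLpNorm w p (μ.restrict S) ≤ eLpNorm v p (μ.restrict Sᶜ) :=
    eLpNorm_restrict_ball_comp_add_right_le hv (by linarith)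
  have htranslate : ∫⁻ x, ‖u (x - a)‖ₑ ^ (p.toReal / 2) * ‖v (x - b)‖ₑ ^ (p.toReal / 2) ∂μ
      = ∫⁻ x, ‖u x‖ₑ ^ (p.toReal / 2) * ‖w x‖ₑ ^ (p.toReal / 2) ∂μ := by
    rw [← lintegral_add_right_eq_self _ a]
    simp only [add_sub_cancel_right, w, add_sub_assoc]
  rw [htranslate, ← lintegral_add_compl _ measurableSet_ball]
  gcongr
  · refine (lintegral_enorm_rpow_half_mul_le hp0 hp hu.restrict hw.restrict).trans ?_
    gcongr
    exact Measure.restrict_le_self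
  · refine (lintegral_enorm_rpow_half_mul_le hp0 hp hu.restrict hw.restrict).trans ?_
    gcongr
    exact (eLpNorm_mono_measure w Measure.restrict_le_self).trans hw_norm.le

theorem tendsto_biSup_biSup_lintegral_translate_overlap [ProperSpace α] [μ.Regular]
    [NormedSpace ℝ F] [Fact (1 ≤ p)] (hp : p ≠ ∞) {E : Set (Lp F p μ)} (hE : TotallyBounded E)
    {β : Type*} {l : Filter β} {a b : β → α} (hab : Tendsto (fun n => ‖a n - b n‖) l atTop) :
    Tendsto (fun n => ⨆ u ∈ E, ⨆ v ∈ E,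
      ∫⁻ x, ‖u (x - a n)‖ₑ ^ (p.toReal / 2) * ‖v (x - b n)‖ₑ ^ (p.toReal / 2) ∂μ) l (𝓝 0) := by
  have hp0 : p ≠ 0 := (zero_lt_one.trans_le Fact.out).ne'
  set M := ⨆ u ∈ E, eLpNorm u p μ
  set τ := fun R => ⨆ u ∈ E, eLpNorm u p (μ.restrict (ball 0 R)ᶜ)
  have hM : M ≠ ∞ := by simpa only [Lp.enorm_def] using hE.isBounded.iSup_enorm_ne_top
  have hτ : Tendsto (fun n => τ (‖a n - b n‖ / 2)) l (𝓝 0) :=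
    (hE.tendsto_iSup_eLpNorm_restrict_compl_ball hp).comp (hab.atTop_div_const two_pos)
  have hbound : Tendsto (fun n => 2 * (M * τ (‖a n - b n‖ / 2)) ^ (p.toReal / 2)) l (𝓝 0) := by
    have h := ENNReal.Tendsto.const_mul (a := 2)
      ((ENNReal.continuous_rpow_const (y := p.toReal / 2)).tendsto _ |>.comp
        (ENNReal.Tendsto.const_mul hτ (.inr hM))) (.inr ENNReal.ofNat_ne_top)
    simpa [ENNReal.zero_rpow_of_pos (half_pos (ENNReal.toReal_pos hp0 hp))] using h
  refine tendsto_of_tendsto_of_tendsto_of_le_of_le tendsto_const_nhds hbound (fun _ => bot_le)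
    fun n => iSup₂_le fun u hu => iSup₂_le fun v hv => ?_
  set R := ‖a n - b n‖ / 2
  have hM_ge : ∀ w ∈ E, eLpNorm w p μ ≤ M := fun w hw =>
    le_biSup (fun w : Lp F p μ => eLpNorm w p μ) hw
  have hτ_ge : ∀ w ∈ E, eLpNorm w p (μ.restrict (ball 0 R)ᶜ) ≤ τ R := fun w hw =>
    le_biSup (fun w : Lp F p μ => eLpNorm w p (μ.restrict (ball 0 R)ᶜ)) hw
  refine (lintegral_translate_overlap_le hp0 hp (Lp.aestronglyMeasurable u)
    (Lp.aestronglyMeasurable v) (a n) (b n)).trans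
    (le_of_le_of_eq (add_le_add ?_ ?_) (two_mul _).symm)
  · gcongr
    exacts [hM_ge u hu, hτ_ge v hv]
  · rw [mul_comm M]
    gcongr
    exacts [hτ_ge u hu, hM_ge v hv]

end

theorem separated_translates_overlap_vanishes_general
    (ν : ℕ) (q : ℝ)
    [Fact (1 ≤ ENNReal.ofReal q)]
    (E : Set (Lp ℂ (ENNReal.ofReal q)
      (volume : Measure (EuclideanSpace ℝ (Fin ν)))))
    (hE : IsCompact (closure E))
    (y₁ y₂ : ℕ → EuclideanSpace ℝ (Fin ν))
    (hy : Tendsto (fun n => ‖y₁ n - y₂ n‖) atTop atTop) :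
    Tendsto (fun n : ℕ => ⨆ u ∈ E, ⨆ v ∈ E,
        ∫ x : EuclideanSpace ℝ (Fin ν),
          ‖u (x - y₁ n)‖ ^ (q / 2) * ‖v (x - y₂ n)‖ ^ (q / 2))
      atTop (nhds 0) := by
  have hq : 0 < q := zero_lt_one.trans_le (ENNReal.one_le_ofReal.1 Fact.out)
  have h := tendsto_biSup_biSup_lintegral_translate_overlap ENNReal.ofReal_ne_top
    (hE.totallyBounded.subset subset_closure) hy
  rw [ENNReal.toReal_ofReal hq.le] at h
  refine tendsto_biSup_biSup_of_le_toReal h (fun n u v => integral_nonneg fun x => by positivity)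
    fun n u v => (Real.le_norm_self _).trans ((norm_integral_le_lintegral_norm _).trans_eq ?_)
  simp only [ofReal_norm, enorm_mul, Real.enorm_rpow_of_nonneg (norm_nonneg _) (half_pos hq).le,
    enorm_norm]

theorem separated_translates_overlap_vanishes
    (ν : ℕ) (hν : 1 ≤ ν) (q : ℝ) (hq : 1 ≤ q)
    [Fact (1 ≤ ENNReal.ofReal q)]
    (E : Set (Lp ℂ (ENNReal.ofReal q)
      (volume : Measure (EuclideanSpace ℝ (Fin ν)))))
    (hE : IsCompact (closure E))
    (y₁ y₂ : ℕ → EuclideanSpace ℝ (Fin ν))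
    (hy : Tendsto (fun n => ‖y₁ n - y₂ n‖) atTop atTop) :
    Tendsto (fun n : ℕ => ⨆ u ∈ E, ⨆ v ∈ E,
        ∫ x : EuclideanSpace ℝ (Fin ν),
          ‖u (x - y₁ n)‖ ^ (q / 2) * ‖v (x - y₂ n)‖ ^ (q / 2))
      atTop (nhds 0) :=
  separated_translates_overlap_vanishes_general ν q E hE y₁ y₂ hy
end
end

section
/- For every real α > 0 and every integer ℓ ≥ 2 there exists a constant C_ℓ (depending only on α and ℓ) such that for all complex numbers z₁, …, z_ℓ: | |z₁ + ⋯ + z_ℓ|^α (z₁ + ⋯ + z_ℓ) − Σ_{j=1}^ℓ |z_j|^α z_j | ≤ C_ℓ Σ_{1 ≤ j ≠ k ≤ ℓ} |z_j|^α |z_k|. -/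
/-! Let `z m` be a profile of largest modulus. Every other term `‖z j‖ ^ α • z j` is bounded by the
cross term `‖z m‖ ^ α * ‖z j‖`. The map `F z = ‖z‖ ^ α • z` satisfies
`‖F a - F b‖ ≲ max ‖a‖ ‖b‖ ^ α * ‖a - b‖`, and the full sum has modulus at most `ℓ * ‖z m‖`, so
`F (∑ j, z j) - F (z m)` is bounded by `ℓ ^ α` times the same cross terms. -/

open Finset

lemma one_sub_rpow_le_max_mul_one_sub {α u : ℝ} (hα : 0 ≤ α) (hu₀ : 0 ≤ u) (hu₁ : u ≤ 1) :
    1 - u ^ α ≤ max 1 α * (1 - u) := by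
  rcases le_total α 1 with hα₁ | hα₁
  · have hu : u ≤ u ^ α := by
      simpa using Real.rpow_le_rpow_of_exponent_ge' hu₀ hu₁ hα hα₁
    nlinarith [le_max_left 1 α]
  · have bernoulli := one_add_mul_self_le_rpow_one_add (s := u - 1) (by linarith) hα₁
    rw [add_sub_cancel] at bernoulli
    nlinarith [le_max_right 1 α]

lemma rpow_sub_rpow_mul_le {α s t : ℝ} (hα : 0 ≤ α) (ht : 0 ≤ t) (hts : t ≤ s) :
    (s ^ α - t ^ α) * s ≤ max 1 α * s ^ α * (s - t) := by
  obtain rfl | hs := (ht.trans hts).eq_or_lt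
  · obtain rfl : t = 0 := le_antisymm hts ht
    simp
  have hu₀ : 0 ≤ t / s := div_nonneg ht hs.le
  have key := one_sub_rpow_le_max_mul_one_sub hα hu₀ (div_le_one_of_le₀ hts hs.le)
  rw [← div_mul_cancel₀ t hs.ne', Real.mul_rpow hu₀ hs.le]
  calc (s ^ α - (t / s) ^ α * s ^ α) * s = s ^ α * (1 - (t / s) ^ α) * s := by ring
    _ ≤ s ^ α * (max 1 α * (1 - t / s)) * s := by gcongr
    _ = max 1 α * s ^ α * (s - t / s * s) := by ring

section NormedSpace

variable {E : Type*} [SeminormedAddCommGroup E] [NormedSpace ℝ E]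

lemma norm_rpow_smul_sub_rpow_smul_le {α : ℝ} (hα : 0 ≤ α) (a b : E) :
    ‖‖a‖ ^ α • a - ‖b‖ ^ α • b‖ ≤ (1 + max 1 α) * max ‖a‖ ‖b‖ ^ α * ‖a - b‖ := by
  wlog hba : ‖b‖ ≤ ‖a‖ generalizing a b
  · simpa only [norm_sub_rev, max_comm] using this b a (le_of_not_ge hba)
  have hmono : ‖b‖ ^ α ≤ ‖a‖ ^ α := Real.rpow_le_rpow (norm_nonneg b) hba hα
  have hsplit : ‖a‖ ^ α • a - ‖b‖ ^ α • b = ‖a‖ ^ α • (a - b) + (‖a‖ ^ α - ‖b‖ ^ α) • b := by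
    rw [smul_sub, sub_smul]; abel
  calc ‖‖a‖ ^ α • a - ‖b‖ ^ α • b‖
      ≤ ‖a‖ ^ α * ‖a - b‖ + (‖a‖ ^ α - ‖b‖ ^ α) * ‖b‖ := by
        rw [hsplit]
        refine (norm_add_le _ _).trans_eq ?_
        rw [norm_smul, norm_smul, Real.norm_of_nonneg (by positivity),
          Real.norm_of_nonneg (sub_nonneg.2 hmono)]
    _ ≤ ‖a‖ ^ α * ‖a - b‖ + max 1 α * ‖a‖ ^ α * ‖a - b‖ := by
        gcongr ‖a‖ ^ α * ‖a - b‖ + ?_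
        calc (‖a‖ ^ α - ‖b‖ ^ α) * ‖b‖ ≤ (‖a‖ ^ α - ‖b‖ ^ α) * ‖a‖ := by
              gcongr
          _ ≤ max 1 α * ‖a‖ ^ α * (‖a‖ - ‖b‖) := rpow_sub_rpow_mul_le hα (norm_nonneg b) hba
          _ ≤ max 1 α * ‖a‖ ^ α * ‖a - b‖ := by gcongr; exact norm_sub_norm_le a b
    _ = (1 + max 1 α) * max ‖a‖ ‖b‖ ^ α * ‖a - b‖ := by rw [max_eq_left hba]; ring

lemma sum_erase_le_sum_offDiag {ι M : Type*} [DecidableEq ι] [AddCommMonoid M] [PartialOrder M]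
    [IsOrderedAddMonoid M] {s : Finset ι} {i : ι} (hi : i ∈ s) {f : ι → ι → M}
    (hf : ∀ j k, 0 ≤ f j k) :
    ∑ j ∈ s.erase i, f i j ≤ ∑ p ∈ s.offDiag, f p.1 p.2 := by
  rw [← sum_image (f := fun p => f p.1 p.2) (g := (i, ·)) (by simp)]
  refine sum_le_sum_of_subset_of_nonneg ?_ fun p _ _ => hf p.1 p.2
  intro p hp
  obtain ⟨j, hj, rfl⟩ := mem_image.1 hp
  exact mem_offDiag.2 ⟨hi, mem_of_mem_erase hj, (ne_of_mem_erase hj).symm⟩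

lemma norm_rpow_smul_sum_sub_sum_rpow_smul_le {ι : Type*} [Fintype ι] [DecidableEq ι] {α : ℝ}
    (hα : 0 ≤ α) (z : ι → E) :
    ‖‖∑ j, z j‖ ^ α • ∑ j, z j - ∑ j, ‖z j‖ ^ α • z j‖ ≤
      ((1 + max 1 α) * (Fintype.card ι : ℝ) ^ α + 1) *
        ∑ p ∈ univ.offDiag, ‖z p.1‖ ^ α * ‖z p.2‖ := by
  cases isEmpty_or_nonempty ι
  · simp
  obtain ⟨m, hm⟩ := Finite.exists_max (‖z ·‖)
  set S := ∑ j, z j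
  set R := ∑ j ∈ univ.erase m, ‖z m‖ ^ α * ‖z j‖
  have hS : ‖S‖ ≤ Fintype.card ι * ‖z m‖ :=
    (norm_sum_le _ _).trans (by simpa using sum_le_sum fun j (_ : j ∈ univ) => hm j)
  have hSm : ‖S - z m‖ ≤ ∑ j ∈ univ.erase m, ‖z j‖ := by
    rw [sub_eq_iff_eq_add'.2 (add_sum_erase univ z (mem_univ m)).symm]
    exact norm_sum_le _ _
  have hlargest : ‖‖S‖ ^ α • S - ‖z m‖ ^ α • z m‖ ≤ (1 + max 1 α) * Fintype.card ι ^ α * R := by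
    calc _ ≤ (1 + max 1 α) * max ‖S‖ ‖z m‖ ^ α * ‖S - z m‖ :=
          norm_rpow_smul_sub_rpow_smul_le hα _ _
      _ ≤ (1 + max 1 α) * (Fintype.card ι * ‖z m‖) ^ α * ∑ j ∈ univ.erase m, ‖z j‖ := by
          gcongr
          exact max_le hS (le_mul_of_one_le_left (norm_nonneg _) (mod_cast Fintype.card_pos))
      _ = (1 + max 1 α) * Fintype.card ι ^ α * R := by
          rw [Real.mul_rpow (by positivity) (norm_nonneg _), mul_sum, mul_sum]
          exact sum_congr rfl fun j _ => by ring
  have hrest : ‖∑ j ∈ univ.erase m, ‖z j‖ ^ α • z j‖ ≤ R := by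
    refine (norm_sum_le _ _).trans (sum_le_sum fun j _ => ?_)
    rw [norm_smul, Real.norm_of_nonneg (by positivity)]
    gcongr
    exact hm j
  have hR : R ≤ ∑ p ∈ univ.offDiag, ‖z p.1‖ ^ α * ‖z p.2‖ :=
    sum_erase_le_sum_offDiag (f := fun j k => ‖z j‖ ^ α * ‖z k‖) (mem_univ m)
      fun _ _ => by positivity
  rw [← add_sum_erase univ (fun j => ‖z j‖ ^ α • z j) (mem_univ m)]
  calc _ = ‖(‖S‖ ^ α • S - ‖z m‖ ^ α • z m) - ∑ j ∈ univ.erase m, ‖z j‖ ^ α • z j‖ := by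
        rw [sub_sub]
    _ ≤ ((1 + max 1 α) * Fintype.card ι ^ α + 1) * R := by
        linarith [norm_sub_le (‖S‖ ^ α • S - ‖z m‖ ^ α • z m)
          (∑ j ∈ univ.erase m, ‖z j‖ ^ α • z j)]
    _ ≤ _ := by gcongr

end NormedSpace

theorem nonlinearity_splitting_many_terms_general
    (α : ℝ) (hα : 0 < α) (ℓ : ℕ) :
    ∃ C : ℝ, ∀ z : Fin ℓ → ℂ,
      ‖((‖∑ j, z j‖ ^ α : ℝ) : ℂ) * (∑ j, z j) - ∑ j, ((‖z j‖ ^ α : ℝ) : ℂ) * z j‖ ≤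
        C * ∑ p ∈ Finset.univ.offDiag, ‖z p.1‖ ^ α * ‖z p.2‖ := by
  refine ⟨(1 + max 1 α) * (ℓ : ℝ) ^ α + 1, fun z => ?_⟩
  simpa only [← Complex.real_smul, Fintype.card_fin] using
    norm_rpow_smul_sum_sub_sum_rpow_smul_le hα.le z

theorem nonlinearity_splitting_many_terms
    (α : ℝ) (hα : 0 < α) (ℓ : ℕ) (hℓ : 2 ≤ ℓ) :
    ∃ C : ℝ, ∀ z : Fin ℓ → ℂ,
      ‖((‖∑ j, z j‖ ^ α : ℝ) : ℂ) * (∑ j, z j) - ∑ j, ((‖z j‖ ^ α : ℝ) : ℂ) * z j‖ ≤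
        C * ∑ p ∈ Finset.univ.offDiag, ‖z p.1‖ ^ α * ‖z p.2‖ :=
  nonlinearity_splitting_many_terms_general α hα ℓ
end
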